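/- arXiv:1102.5071 — 5 statements merged into one kernel-verified Lean document; each statement's English description precedes it below -/
import Mathlib

section
/- Let Ω : ℝ → M_n(ℂ) be a matrix-valued function differentiable at t with derivative Ω̇(t). Then the map s ↦ exp(Ω(s)) is differentiable at t, and its derivative equals (∫_0^1 exp(r·Ω(t)) · Ω̇(t) · exp(−r·Ω(t)) dr) · exp(Ω(t)), where the integral is the Bochner integral of the matrix-valued integrand over r ∈ [0,1]. -/
/-!
Duhamel's formula: differentiating `r ↦ exp (r • (X + B)) * exp (-(r • X))` and integrating over
`[0, 1]` gives `exp (X + B) - exp X = (∫ r in 0..1, exp (r • (X + B)) * B * exp (-(r • X))) * exp X`.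
Replacing `B` by `s • B` and letting `s → 0` computes the directional derivatives of `exp`, which is
Fréchet differentiable because it is analytic; the chain rule then gives the formula in any real
Banach algebra. Matrices are made a Banach algebra by the `L^∞` operator norm, which induces the same
topology as the entrywise sup norm; the Bochner integrals for the two norms agree entrywise.
-/

open NormedSpace Filter Topology

section BanachAlgebra

variable {A : Type*} [NormedRing A] [NormedAlgebra ℝ A] [CompleteSpace A]

theorem continuous_exp_smul_mul_mul_exp_neg_smul (X B : A) :
    Continuous fun r : ℝ => exp (r • X) * B * exp (-(r • X)) := by
  let +nondep : NormedAlgebra ℚ A := .restrictScalars ℚ ℝ A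
  fun_prop

theorem exp_add_sub_exp_eq_integral_mul (X B : A) :
    exp (X + B) - exp X
      = (∫ r in (0:ℝ)..1, exp (r • (X + B)) * B * exp (-(r • X))) * exp X := by
  let +nondep : NormedAlgebra ℚ A := .restrictScalars ℚ ℝ A
  have hderiv (r : ℝ) : HasDerivAt (fun u : ℝ => exp (u • (X + B)) * exp (-(u • X)))
      (exp (r • (X + B)) * B * exp (-(r • X))) r := by
    have h := (hasDerivAt_exp_smul_const (X + B) r).mul (hasDerivAt_exp_smul_const' (-X) r)
    simp only [smul_neg] at h
    exact h.congr_deriv (by noncomm_ring)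
  have hcont : Continuous fun r : ℝ => exp (r • (X + B)) * B * exp (-(r • X)) := by fun_prop
  rw [intervalIntegral.integral_eq_sub_of_hasDerivAt (fun r _ => hderiv r)
    (hcont.intervalIntegrable 0 1)]
  have hinv : exp (-X) * exp X = 1 := by
    rw [← exp_add_of_commute (Commute.neg_left (Commute.refl X)), neg_add_cancel, exp_zero]
  simp only [one_smul, zero_smul, neg_zero, exp_zero, mul_one, sub_mul, one_mul, mul_assoc, hinv]

theorem hasDerivAt_exp_add_smul (X B : A) :
    HasDerivAt (fun s : ℝ => exp (X + s • B))
      ((∫ r in (0:ℝ)..1, exp (r • X) * B * exp (-(r • X))) * exp X) 0 := by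
  let +nondep : NormedAlgebra ℚ A := .restrictScalars ℚ ℝ A
  set g : ℝ → A := fun s =>
    (∫ r in (0:ℝ)..1, exp (r • (X + s • B)) * B * exp (-(r • X))) * exp X
  have hg : Continuous g :=
    (intervalIntegral.continuous_parametric_intervalIntegral_of_continuous'
      (by fun_prop) 0 1).mul continuous_const
  have hg0 : g 0 = (∫ r in (0:ℝ)..1, exp (r • X) * B * exp (-(r • X))) * exp X := by
    simp only [g, zero_smul, add_zero]
  have hsub (s : ℝ) : exp (X + s • B) - exp X = s • g s := by
    simp only [g, exp_add_sub_exp_eq_integral_mul, mul_smul_comm, smul_mul_assoc,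
      intervalIntegral.integral_smul]
  have hslope : slope (fun s : ℝ => exp (X + s • B)) 0 =ᶠ[𝓝[≠] 0] g := by
    filter_upwards [self_mem_nhdsWithin] with s hs
    rw [slope_def_module, zero_smul, add_zero, sub_zero, hsub, inv_smul_smul₀ hs]
  rw [hasDerivAt_iff_tendsto_slope, ← hg0]
  exact ((hg.tendsto 0).mono_left nhdsWithin_le_nhds).congr' hslope.symm

theorem fderiv_exp_apply (X B : A) :
    fderiv ℝ exp X B = (∫ r in (0:ℝ)..1, exp (r • X) * B * exp (-(r • X))) * exp X := by
  have hline : HasDerivAt (fun s : ℝ => X + s • B) B 0 := by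
    simpa using ((hasDerivAt_id (0 : ℝ)).smul_const B).const_add X
  have h := (exp_analytic (𝕂 := ℝ) X).differentiableAt.hasFDerivAt.comp_hasDerivAt_of_eq 0 hline
    (by simp)
  exact h.unique (hasDerivAt_exp_add_smul X B)

theorem HasDerivAt.normedSpace_exp {Ω : ℝ → A} {Ω' : A} {t : ℝ} (hΩ : HasDerivAt Ω Ω' t) :
    HasDerivAt (fun s => NormedSpace.exp (Ω s))
      ((∫ r in (0:ℝ)..1, NormedSpace.exp (r • Ω t) * Ω' * NormedSpace.exp (-(r • Ω t))) *
        NormedSpace.exp (Ω t)) t :=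
  fderiv_exp_apply (Ω t) Ω' ▸
    (exp_analytic (𝕂 := ℝ) (Ω t)).differentiableAt.hasFDerivAt.comp_hasDerivAt t hΩ

end BanachAlgebra

attribute [local instance] Matrix.normedAddCommGroup Matrix.normedSpace

theorem Matrix.linftyOp_intervalIntegral_eq {m n α : Type*} [Fintype m] [Fintype n]
    [NormedAddCommGroup α] [NormedSpace ℝ α] [CompleteSpace α] {μ : MeasureTheory.Measure ℝ}
    [MeasureTheory.IsLocallyFiniteMeasure μ] {f : ℝ → Matrix m n α} (hf : Continuous f)
    (a b : ℝ) :
    (letI := Matrix.linftyOpNormedAddCommGroup (m := m) (n := n) (α := α)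
     letI := Matrix.linftyOpNormedSpace (R := ℝ) (m := m) (n := n) (α := α)
     ∫ r in a..b, f r ∂μ) = ∫ r in a..b, f r ∂μ := by
  -- The norm's uniform structure agrees with `Matrix`'s only after unfolding, so instance search
  -- misses this.
  have : @CompleteSpace (Matrix m n α) PseudoMetricSpace.toUniformSpace :=
    inferInstanceAs (CompleteSpace (m → n → α))
  ext i j
  let entrySup : Matrix m n α →L[ℝ] α :=
    ⟨Matrix.entryLinearMap ℝ α i j, (continuous_apply j).comp (continuous_apply i)⟩
  have hsup := entrySup.intervalIntegral_comp_comm (hf.intervalIntegrable (μ := μ) a b)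
  let := Matrix.linftyOpNormedAddCommGroup (m := m) (n := n) (α := α)
  let := Matrix.linftyOpNormedSpace (R := ℝ) (m := m) (n := n) (α := α)
  let entryLinfty : Matrix m n α →L[ℝ] α :=
    ⟨Matrix.entryLinearMap ℝ α i j, (continuous_apply j).comp (continuous_apply i)⟩
  exact (entryLinfty.intervalIntegral_comp_comm (hf.intervalIntegrable (μ := μ) a b)).symm.trans hsup

/-- If `Ω : ℝ → M_n(ℂ)` is differentiable at `t` with derivative `Ω'`, then
`s ↦ exp (Ω s)` is differentiable at `t` with derivative
`(∫_0^1 exp (r • Ω t) * Ω' * exp (−r • Ω t) dr) * exp (Ω t)`. -/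
theorem hasDerivAt_exp_eq_integral {n : ℕ} (Ω : ℝ → Matrix (Fin n) (Fin n) ℂ) (t : ℝ)
    (Ω' : Matrix (Fin n) (Fin n) ℂ) (hΩ : HasDerivAt Ω Ω' t) :
    HasDerivAt (fun s => NormedSpace.exp (Ω s))
      ((∫ r in (0:ℝ)..1,
          NormedSpace.exp (r • Ω t) * Ω' * NormedSpace.exp (-(r • Ω t))) *
        NormedSpace.exp (Ω t)) t := by
  let : NormedRing (Matrix (Fin n) (Fin n) ℂ) := Matrix.linftyOpNormedRing
  let : NormedAlgebra ℝ (Matrix (Fin n) (Fin n) ℂ) := Matrix.linftyOpNormedAlgebra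
  have : @CompleteSpace (Matrix (Fin n) (Fin n) ℂ) PseudoMetricSpace.toUniformSpace :=
    FiniteDimensional.complete ℝ _
  -- `HasDerivAt` only involves the topology, which both norms induce definitionally.
  exact hΩ.normedSpace_exp.congr_deriv (congrArg (· * exp (Ω t))
    (Matrix.linftyOp_intervalIntegral_eq (continuous_exp_smul_mul_mul_exp_neg_smul (Ω t) Ω') 0 1))
end

section
/- Let Ω : ℝ → M_n(ℂ) be a matrix-valued function differentiable at t with derivative Ω̇(t). Then the map s ↦ exp(Ω(s)) is differentiable at t, the series Σ_{m=0}^∞ (1/(m+1)!) [Ω(t), Ω̇(t)]_m converges, and the derivative of s ↦ exp(Ω(s)) at t equals (Σ_{m=0}^∞ (1/(m+1)!) [Ω(t), Ω̇(t)]_m) · exp(Ω(t)). -/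
attribute [local instance] Matrix.normedAddCommGroup Matrix.normedSpace

/-- Iterated commutators: `[X,Y]₀ = Y`, `[X,Y]_{m+1} = [X,[X,Y]_m]`. -/
noncomputable def iterComm {n : ℕ} (X Y : Matrix (Fin n) (Fin n) ℂ) :
    ℕ → Matrix (Fin n) (Fin n) ℂ
  | 0 => Y
  | m + 1 => X * iterComm X Y m - iterComm X Y m * X

/-!
`exp` is the sum of the series `y ^ n / n!`, whose termwise derivatives
`E ↦ (∑_{i < n} X ^ (n - 1 - i) * E * X ^ i) / n!` are summable uniformly on balls, so `exp` is
differentiable with the termwise sum as derivative. Left multiplication by `X` is `ad X + R X`,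
where right multiplication `R X` commutes with `ad X = L X - R X`; the binomial theorem then
regroups the `(k + 1)`-st term into `∑_{m + p = k} (ad X) ^ m E / (m + 1)! * X ^ p / p!`, and these
are the terms of the Cauchy product of `∑ (ad X) ^ m E / (m + 1)!` with `∑ X ^ p / p! = exp X`.
-/

open Finset
open scoped Nat RightActions

theorem Commute.sum_range_pow_mul_add_pow {R : Type*} [Semiring R] {a b : R} (h : Commute a b)
    (n : ℕ) :
    ∑ i ∈ range (n + 1), b ^ i * (a + b) ^ (n - i) =
      ∑ kl ∈ antidiagonal n, (n + 1).choose kl.1 • (b ^ kl.1 * a ^ kl.2) := by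
  induction n with
  | zero => simp
  | succ n ih =>
    have hL : ∑ i ∈ range (n + 2), b ^ i * (a + b) ^ (n + 1 - i) =
        b * ∑ i ∈ range (n + 1), b ^ i * (a + b) ^ (n - i) + (a + b) ^ (n + 1) := by
      simp [sum_range_succ' _ (n + 1), mul_sum, pow_succ', mul_assoc]
    have hR : ∑ kl ∈ antidiagonal (n + 1), (n + 2).choose kl.1 • (b ^ kl.1 * a ^ kl.2) =
        b * ∑ kl ∈ antidiagonal n, (n + 1).choose kl.1 • (b ^ kl.1 * a ^ kl.2) +
          (b + a) ^ (n + 1) := by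
      rw [h.symm.add_pow', Nat.sum_antidiagonal_succ, Nat.sum_antidiagonal_succ]
      simp only [Nat.choose_succ_succ, add_smul, sum_add_distrib, mul_sum, pow_succ', mul_assoc,
        mul_smul_comm, Nat.choose_zero_right, one_smul, pow_zero, one_mul]
      abel
    rw [hL, hR, ih, add_comm b a]

theorem inv_factorial_mul_choose (K : Type*) [Field K] [CharZero K] (p m : ℕ) :
    ((p + m + 1)! : K)⁻¹ * (p + m + 1).choose p = (p ! : K)⁻¹ * ((m + 1)! : K)⁻¹ := by
  have hfact : ((p + (m + 1))! : K) ≠ 0 := Nat.cast_ne_zero.2 (Nat.factorial_ne_zero _)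
  rw [add_assoc, Nat.cast_add_choose]
  field_simp

theorem summable_inv_factorial_mul_mul_pow (r : ℝ) :
    Summable fun n : ℕ => (n ! : ℝ)⁻¹ * (n * r ^ (n - 1)) := by
  refine (summable_nat_add_iff 1).1 ((Real.summable_pow_div_factorial r).congr fun n => ?_)
  rw [Nat.factorial_succ]
  push_cast
  field_simp

section NormedAlgebra

variable {𝕂 𝔸 : Type*} [RCLike 𝕂] [NormedRing 𝔸] [NormedAlgebra 𝕂 𝔸]

theorem norm_pow_mul_le (y E : 𝔸) (n : ℕ) : ‖y ^ n * E‖ ≤ ‖y‖ ^ n * ‖E‖ := by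
  induction n with
  | zero => simp
  | succ n ih =>
    rw [pow_succ', mul_assoc, pow_succ', mul_assoc]
    exact (norm_mul_le _ _).trans (mul_le_mul_of_nonneg_left ih (norm_nonneg y))

theorem norm_mul_pow_le (E y : 𝔸) (n : ℕ) : ‖E * y ^ n‖ ≤ ‖E‖ * ‖y‖ ^ n := by
  induction n with
  | zero => simp
  | succ n ih =>
    rw [pow_succ, ← mul_assoc, pow_succ, ← mul_assoc]
    exact (norm_mul_le _ _).trans (mul_le_mul_of_nonneg_right ih (norm_nonneg y))

variable (𝕂) in
noncomputable def expFDerivTerm (X : 𝔸) (n : ℕ) : 𝔸 →L[𝕂] 𝔸 :=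
  (n !⁻¹ : 𝕂) • ∑ i ∈ range n, X ^ (n.pred - i) •> ContinuousLinearMap.id 𝕂 𝔸 <• X ^ i

theorem hasFDerivAt_inv_factorial_smul_pow (X : 𝔸) (n : ℕ) :
    HasFDerivAt (fun y : 𝔸 => (n !⁻¹ : 𝕂) • y ^ n) (expFDerivTerm 𝕂 X n) X :=
  (hasFDerivAt_pow' n).fun_const_smul _

theorem expFDerivTerm_apply (X E : 𝔸) (n : ℕ) :
    expFDerivTerm 𝕂 X n E = (n !⁻¹ : 𝕂) • ∑ i ∈ range n, X ^ (n - 1 - i) * E * X ^ i := by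
  simp [expFDerivTerm, mul_assoc]

theorem norm_expFDerivTerm_le {X : 𝔸} {r : ℝ} (hX : ‖X‖ ≤ r) (n : ℕ) :
    ‖expFDerivTerm 𝕂 X n‖ ≤ (n ! : ℝ)⁻¹ * (n * r ^ (n - 1)) := by
  have hr : 0 ≤ r := (norm_nonneg X).trans hX
  refine ContinuousLinearMap.opNorm_le_bound _ (by positivity) fun E => ?_
  have hterm : ∀ i ∈ range n, ‖X ^ (n - 1 - i) * E * X ^ i‖ ≤ r ^ (n - 1) * ‖E‖ := by
    intro i hi
    calc ‖X ^ (n - 1 - i) * E * X ^ i‖ ≤ ‖X‖ ^ (n - 1 - i) * ‖E‖ * ‖X‖ ^ i :=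
          (norm_mul_pow_le _ _ _).trans
            (mul_le_mul_of_nonneg_right (norm_pow_mul_le _ _ _) (by positivity))
      _ = ‖X‖ ^ (n - 1) * ‖E‖ := by
          rw [mul_right_comm, ← pow_add, Nat.sub_add_cancel (by simp at hi; omega)]
      _ ≤ r ^ (n - 1) * ‖E‖ := by gcongr
  calc ‖expFDerivTerm 𝕂 X n E‖
      ≤ (n ! : ℝ)⁻¹ * ∑ i ∈ range n, ‖X ^ (n - 1 - i) * E * X ^ i‖ := by
        rw [expFDerivTerm_apply, norm_smul, norm_inv, RCLike.norm_natCast]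
        gcongr
        exact norm_sum_le _ _
    _ ≤ (n ! : ℝ)⁻¹ * (n * r ^ (n - 1)) * ‖E‖ := by
        rw [mul_assoc]
        gcongr
        simpa [mul_assoc] using sum_le_sum hterm

open LinearMap in
theorem expFDerivTerm_succ_apply (X E : 𝔸) (k : ℕ) :
    expFDerivTerm 𝕂 X (k + 1) E = ∑ kl ∈ antidiagonal k,
      (((kl.1 + 1)! : 𝕂)⁻¹ • ((mulLeft 𝕂 X - mulRight 𝕂 X) ^ kl.1) E) *
        ((kl.2 ! : 𝕂)⁻¹ • X ^ kl.2) := by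
  have hcomm : Commute (mulLeft 𝕂 X - mulRight 𝕂 X) (mulRight 𝕂 X) :=
    (commute_mulLeft_right X X).sub_left (Commute.refl _)
  have h := congrArg (fun T : Module.End 𝕂 𝔸 => T E) (hcomm.sum_range_pow_mul_add_pow k)
  simp only [sub_add_cancel, pow_mulLeft, pow_mulRight, Module.End.mul_apply,
    LinearMap.sum_apply, LinearMap.smul_apply, mulLeft_apply, mulRight_apply] at h
  rw [expFDerivTerm_apply, Nat.add_sub_cancel, h, smul_sum, ← Nat.sum_antidiagonal_swap]
  refine sum_congr rfl fun ⟨m, p⟩ hmp => ?_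
  obtain rfl : m + p = k := mem_antidiagonal.1 hmp
  rw [Prod.swap_prod_mk, smul_mul_smul_comm, ← Nat.cast_smul_eq_nsmul 𝕂, smul_smul,
    add_comm m p, inv_factorial_mul_choose, mul_comm]

open LinearMap in
theorem norm_mulLeft_sub_mulRight_pow_apply_le (X E : 𝔸) (m : ℕ) :
    ‖((mulLeft 𝕂 X - mulRight 𝕂 X) ^ m) E‖ ≤ (2 * ‖X‖) ^ m * ‖E‖ := by
  induction m with
  | zero => simp
  | succ m ih =>
    set F := ((mulLeft 𝕂 X - mulRight 𝕂 X) ^ m) E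
    calc ‖((mulLeft 𝕂 X - mulRight 𝕂 X) ^ (m + 1)) E‖ = ‖X * F - F * X‖ := by
          rw [pow_succ', Module.End.mul_apply]; rfl
      _ ≤ ‖X‖ * ‖F‖ + ‖F‖ * ‖X‖ :=
          (norm_sub_le _ _).trans (add_le_add (norm_mul_le _ _) (norm_mul_le _ _))
      _ = 2 * ‖X‖ * ‖F‖ := by ring
      _ ≤ 2 * ‖X‖ * ((2 * ‖X‖) ^ m * ‖E‖) := by gcongr
      _ = (2 * ‖X‖) ^ (m + 1) * ‖E‖ := by ring

open LinearMap in
theorem summable_norm_inv_factorial_succ_smul_mulLeft_sub_mulRight_pow_apply (X E : 𝔸) :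
    Summable fun m : ℕ => ‖((m + 1)! : 𝕂)⁻¹ • ((mulLeft 𝕂 X - mulRight 𝕂 X) ^ m) E‖ := by
  refine ((Real.summable_pow_div_factorial (2 * ‖X‖)).mul_right ‖E‖).of_nonneg_of_le
    (fun _ => norm_nonneg _) fun m => ?_
  rw [norm_smul, norm_inv, RCLike.norm_natCast, div_mul_eq_mul_div, div_eq_inv_mul]
  gcongr
  · omega
  · exact norm_mulLeft_sub_mulRight_pow_apply_le X E m

variable [CompleteSpace 𝔸]

theorem summable_expFDerivTerm (X : 𝔸) : Summable (expFDerivTerm 𝕂 X) :=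
  .of_norm_bounded (summable_inv_factorial_mul_mul_pow ‖X‖) (norm_expFDerivTerm_le le_rfl)

theorem hasFDerivAt_exp_tsum_expFDerivTerm (X : 𝔸) :
    HasFDerivAt NormedSpace.exp (∑' n, expFDerivTerm 𝕂 X n) X := by
  -- for `Metric.isPreconnected_ball`, which goes through convexity over `ℝ`
  let : NormedSpace ℝ 𝔸 := NormedSpace.restrictScalars ℝ 𝕂 𝔸
  rw [NormedSpace.exp_eq_tsum 𝕂]
  refine hasFDerivAt_tsum_of_isPreconnected (summable_inv_factorial_mul_mul_pow (‖X‖ + 1))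
    Metric.isOpen_ball Metric.isPreconnected_ball
    (fun n y _ => hasFDerivAt_inv_factorial_smul_pow y n)
    (fun n y hy => norm_expFDerivTerm_le (mem_ball_zero_iff.1 hy).le n) (x₀ := X) ?_
    (NormedSpace.expSeries_summable' X) ?_ <;> simp

open LinearMap in
theorem hasSum_expFDerivTerm_apply (X E : 𝔸) :
    HasSum (fun n => expFDerivTerm 𝕂 X n E)
      ((∑' m : ℕ, ((m + 1)! : 𝕂)⁻¹ • ((mulLeft 𝕂 X - mulRight 𝕂 X) ^ m) E) *
        NormedSpace.exp X) := by
  have hU := summable_norm_inv_factorial_succ_smul_mulLeft_sub_mulRight_pow_apply (𝕂 := 𝕂) X E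
  have hexp := NormedSpace.norm_expSeries_summable' (𝕂 := 𝕂) X
  rw [← hasSum_nat_add_iff' 1, NormedSpace.exp_eq_tsum 𝕂,
    tsum_mul_tsum_eq_tsum_sum_antidiagonal_of_summable_norm hU hexp]
  simp only [expFDerivTerm_succ_apply, sum_range_one, expFDerivTerm_apply, sum_range_zero,
    smul_zero, sub_zero]
  exact (summable_norm_sum_mul_antidiagonal_of_summable_norm hU hexp).of_norm.hasSum

open LinearMap in
theorem tsum_expFDerivTerm_apply (X E : 𝔸) :
    (∑' n, expFDerivTerm 𝕂 X n) E =
      (∑' m : ℕ, ((m + 1)! : 𝕂)⁻¹ • ((mulLeft 𝕂 X - mulRight 𝕂 X) ^ m) E) * NormedSpace.exp X :=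
  ((summable_expFDerivTerm X).hasSum.mapL (ContinuousLinearMap.apply 𝕂 𝔸 E)).unique
    (hasSum_expFDerivTerm_apply X E)

open LinearMap in
theorem HasDerivAt.normedSpace_exp_s2 [NormedSpace ℝ 𝔸] [IsScalarTower ℝ 𝕂 𝔸] {f : ℝ → 𝔸}
    {f' : 𝔸} {t : ℝ} (hf : HasDerivAt f f' t) :
    HasDerivAt (fun s => NormedSpace.exp (f s))
      ((∑' m : ℕ, ((m + 1)! : 𝕂)⁻¹ • ((mulLeft 𝕂 (f t) - mulRight 𝕂 (f t)) ^ m) f') *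
        NormedSpace.exp (f t)) t := by
  have h := ((hasFDerivAt_exp_tsum_expFDerivTerm (𝕂 := 𝕂) (f t)).restrictScalars ℝ).comp_hasDerivAt
    t hf
  rwa [ContinuousLinearMap.coe_restrictScalars', tsum_expFDerivTerm_apply] at h

end NormedAlgebra

theorem iterComm_eq_mulLeft_sub_mulRight_pow_apply {n : ℕ} (X Y : Matrix (Fin n) (Fin n) ℂ)
    (m : ℕ) : iterComm X Y m = ((LinearMap.mulLeft ℂ X - LinearMap.mulRight ℂ X) ^ m) Y := by
  induction m with
  | zero => rfl
  | succ m ih => rw [pow_succ', Module.End.mul_apply, ← ih]; rfl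

/-- If `Ω : ℝ → M_n(ℂ)` is differentiable at `t` with derivative `Ω'`, then
`s ↦ exp (Ω s)` is differentiable at `t`, the series
`Σ_{m=0}^∞ (1/(m+1)!) [Ω t, Ω']_m` converges, and the derivative equals
`(Σ_{m=0}^∞ (1/(m+1)!) [Ω t, Ω']_m) * exp (Ω t)`. -/
theorem hasDerivAt_exp_eq_tsum_iterComm {n : ℕ} (Ω : ℝ → Matrix (Fin n) (Fin n) ℂ) (t : ℝ)
    (Ω' : Matrix (Fin n) (Fin n) ℂ) (hΩ : HasDerivAt Ω Ω' t) :
    (Summable fun m : ℕ => (((m + 1).factorial : ℂ))⁻¹ • iterComm (Ω t) Ω' m) ∧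
      HasDerivAt (fun s => NormedSpace.exp (Ω s))
        ((∑' m : ℕ, (((m + 1).factorial : ℂ))⁻¹ • iterComm (Ω t) Ω' m) *
          NormedSpace.exp (Ω t)) t := by
  let : NormedRing (Matrix (Fin n) (Fin n) ℂ) := Matrix.linftyOpNormedRing
  let : NormedAlgebra ℂ (Matrix (Fin n) (Fin n) ℂ) := Matrix.linftyOpNormedAlgebra
  let : NormedAlgebra ℝ (Matrix (Fin n) (Fin n) ℂ) := Matrix.linftyOpNormedAlgebra
  -- the sup norm of the statement is an instance too, so the operator-norm uniformity is named
  have : @CompleteSpace (Matrix (Fin n) (Fin n) ℂ) PseudoMetricSpace.toUniformSpace :=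
    FiniteDimensional.complete ℂ _
  simp only [iterComm_eq_mulLeft_sub_mulRight_pow_apply]
  exact ⟨(summable_norm_inv_factorial_succ_smul_mulLeft_sub_mulRight_pow_apply (Ω t) Ω').of_norm,
    hΩ.normedSpace_exp_s2⟩
end

section
/- Let m ≥ 1 and let n_1, …, n_m be positive integers such that for some index k one has n_k > 1 + Σ_{i≠k} n_i. Then the iterated integral ξ(n_1,…,n_m) = ∫_0^1 dx_1 ∫_0^{x_1} dx_2 ⋯ ∫_0^{x_{m−1}} dx_m ∏_{i=1}^m P_{n_i−1}(x_i) equals 0. (This is property (P2): a commutator coefficient vanishes whenever one Legendre index exceeds the sum of all the others by at least two.) -/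
/-!
Write the index list as `l₁ ++ n :: l₂` and say that `f` has vanishing moments up to order `d`
if `∫₀¹ xʲ f(x) dx = 0` for all `j < d`. Since `P_{n-1}` is orthogonal to polynomials of degree
`< n - 1` and `xi l₂` is a polynomial of degree `≤ Σ l₂`, the integrand `P_{n-1} · xi l₂` has
vanishing moments up to order `n - 1 - Σ l₂ ≥ Σ l₁ + 1`. Integrating from `0` costs one order
(integrate by parts against `x^{j+1}`; the boundary term is the zeroth moment) and multiplying by
`P_{b-1}` costs `b - 1`, so each outer index `b` costs `b`. After all of `l₁` the outermost
integrand still has vanishing zeroth moment, and that moment is `ξ`.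

Orthogonality of `P_n` follows from the closed form
`∫₀¹ xʲ P_n(x) dx = j(j-1)⋯(j-n+1) / ((j+1)(j+2)⋯(j+n+1))`, proved from the three-term
recurrence.
-/

/-- Shifted Legendre polynomials on `[0,1]`:
`P 0 x = 1`, `P 1 x = 2x − 1`,
`P (n+1) x = ((2n+1)/(n+1)) (2x−1) P n x − (n/(n+1)) P (n−1) x`. -/
noncomputable def shiftedLegendre : ℕ → ℝ → ℝ
  | 0 => fun _ => 1
  | 1 => fun x => 2 * x - 1
  | n + 2 => fun x =>
      ((2 * (n + 1) + 1 : ℝ) / (n + 2)) * (2 * x - 1) * shiftedLegendre (n + 1) x -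
        ((n + 1 : ℝ) / (n + 2)) * shiftedLegendre n x

/-- The time-ordered iterated integral
`ξ(n₁,…,n_m) = ∫_0^1 dx₁ ∫_0^{x₁} dx₂ ⋯ ∫_0^{x_{m−1}} dx_m ∏ᵢ P_{nᵢ−1}(xᵢ)`,
defined recursively: `xi [n₁,…,n_m] x = ∫_0^x P_{n₁−1}(y) · xi [n₂,…,n_m] y dy`. -/
noncomputable def xi : List ℕ → ℝ → ℝ
  | [], _ => 1
  | n :: l, x => ∫ y in (0:ℝ)..x, shiftedLegendre (n - 1) y * xi l y

open Polynomial hiding shiftedLegendre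
open intervalIntegral

theorem List.exists_eq_append_cons_and_eraseIdx_eq {α : Type*} (l : List α) (k : Fin l.length) :
    ∃ l₁ l₂, l = l₁ ++ l.get k :: l₂ ∧ l.eraseIdx k = l₁ ++ l₂ :=
  ⟨l.take k, l.drop (k + 1), by simp [List.getElem_cons_drop], List.eraseIdx_eq_take_drop_succ _ _⟩

theorem Polynomial.exists_natDegree_le_eval_eq_integral (p : ℝ[X]) :
    ∃ q : ℝ[X], q.natDegree ≤ p.natDegree + 1 ∧ ∀ x, q.eval x = ∫ t in (0 : ℝ)..x, p.eval t := by
  refine ⟨∑ i ∈ Finset.range (p.natDegree + 1), C (p.coeff i / (i + 1)) * X ^ (i + 1), ?_, ?_⟩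
  · refine natDegree_sum_le_of_forall_le _ _ fun i hi => (natDegree_C_mul_X_pow_le _ _).trans ?_
    rw [Finset.mem_range] at hi
    omega
  · intro x
    simp only [eval_eq_sum_range (p := p)]
    rw [integral_finsetSum fun i _ => Continuous.intervalIntegrable (by fun_prop) _ _]
    simp only [eval_finsetSum, eval_mul, eval_C, eval_pow, eval_X, integral_const_mul, integral_pow,
      zero_pow (Nat.succ_ne_zero _), sub_zero]
    refine Finset.sum_congr rfl fun i _ => by ring

def MomentsVanish (d : ℕ) (f : ℝ → ℝ) : Prop :=
  ∀ j < d, ∫ x in (0 : ℝ)..1, x ^ j * f x = 0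

namespace MomentsVanish

variable {d e : ℕ} {f : ℝ → ℝ}

theorem mono (h : MomentsVanish d f) (hed : e ≤ d) : MomentsVanish e f :=
  fun j hj => h j (hj.trans_le hed)

theorem integral_eq_zero (h : MomentsVanish (d + 1) f) : ∫ x in (0 : ℝ)..1, f x = 0 := by
  simpa using h 0 d.succ_pos

theorem polynomial_mul (hf : Continuous f) (h : MomentsVanish (d + e) f) {g : ℝ[X]}
    (hg : g.natDegree ≤ e) : MomentsVanish d fun x => g.eval x * f x := by
  intro j hj
  have hexpand : ∀ x : ℝ, x ^ j * (g.eval x * f x) =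
      ∑ i ∈ Finset.range (e + 1), g.coeff i * (x ^ (j + i) * f x) := fun x => by
    rw [eval_eq_sum_range' (Nat.lt_succ_of_le hg), Finset.sum_mul, Finset.mul_sum]
    exact Finset.sum_congr rfl fun i _ => by ring
  simp only [hexpand]
  rw [integral_finsetSum fun i _ => Continuous.intervalIntegrable (by fun_prop) _ _]
  refine Finset.sum_eq_zero fun i hi => ?_
  rw [integral_const_mul, h _ (by rw [Finset.mem_range] at hi; omega), mul_zero]

theorem primitive (hf : Continuous f) (h : MomentsVanish (d + 1) f) :
    MomentsVanish d fun x => ∫ t in (0 : ℝ)..x, f t := by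
  intro j hj
  set F := fun x => ∫ t in (0 : ℝ)..x, f t
  have hF : ∀ x, HasDerivAt F (f x) x := fun x => (hf.integral_hasStrictDerivAt 0 x).hasDerivAt
  have hFc : Continuous F := continuous_iff_continuousAt.2 fun x => (hF x).continuousAt
  have hparts := integral_deriv_mul_eq_sub (a := 0) (b := 1) (u := fun x => x ^ (j + 1))
    (u' := fun x => (j + 1) * x ^ j) (fun x _ => by simpa using hasDerivAt_pow (j + 1) x)
    (fun x _ => hF x) (Continuous.intervalIntegrable (by fun_prop) _ _)
    (hf.intervalIntegrable _ _)
  simp only [mul_assoc] at hparts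
  rw [integral_add (Continuous.intervalIntegrable (by fun_prop) _ _)
    (Continuous.intervalIntegrable (by fun_prop) _ _), integral_const_mul,
    h (j + 1) (by omega)] at hparts
  simpa [F, h.integral_eq_zero, Nat.cast_add_one_ne_zero] using hparts

end MomentsVanish

theorem ascPochhammer_succ_eval_left {S : Type*} [CommSemiring S] (n : ℕ) (x : S) :
    (ascPochhammer S (n + 1)).eval x = x * (ascPochhammer S n).eval (x + 1) := by
  simp [ascPochhammer_succ_left]

theorem descPochhammer_succ_eval_left {R : Type*} [CommRing R] (n : ℕ) (x : R) :
    (descPochhammer R (n + 1)).eval (x + 1) = (x + 1) * (descPochhammer R n).eval x := by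
  simp [descPochhammer_succ_left]

theorem exists_natDegree_le_shiftedLegendre_eq_eval (n : ℕ) :
    ∃ p : ℝ[X], p.natDegree ≤ n ∧ ∀ x, shiftedLegendre n x = p.eval x := by
  induction n using Nat.twoStepInduction with
  | zero => exact ⟨1, by simp, fun x => by simp [shiftedLegendre]⟩
  | one => exact ⟨C 2 * X - 1, by compute_degree, fun x => by simp [shiftedLegendre]⟩
  | more n ih₀ ih₁ =>
    obtain ⟨p, hp_deg, hp⟩ := ih₀
    obtain ⟨q, hq_deg, hq⟩ := ih₁
    refine ⟨C ((2 * (n + 1) + 1 : ℝ) / (n + 2)) * (C 2 * X - 1) * q - C ((n + 1 : ℝ) / (n + 2)) * p,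
      ?_, fun x => by simp [shiftedLegendre, hp, hq]⟩
    have h_lin : (C ((2 * (n + 1) + 1 : ℝ) / (n + 2)) * (C 2 * X - 1)).natDegree ≤ 1 := by
      compute_degree
    have h₁ := natDegree_mul_le_of_le h_lin hq_deg
    have h₂ := (natDegree_C_mul_le ((n + 1 : ℝ) / (n + 2)) p).trans hp_deg
    exact (natDegree_sub_le _ _).trans (max_le (h₁.trans (by omega)) (h₂.trans (by omega)))

@[fun_prop]
theorem continuous_shiftedLegendre (n : ℕ) : Continuous (shiftedLegendre n) := by
  obtain ⟨p, -, hp⟩ := exists_natDegree_le_shiftedLegendre_eq_eval n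
  simpa only [funext hp] using p.continuous

theorem integral_pow_mul_shiftedLegendre (n j : ℕ) :
    ∫ x in (0 : ℝ)..1, x ^ j * shiftedLegendre n x =
      (descPochhammer ℝ n).eval (j : ℝ) / (ascPochhammer ℝ (n + 1)).eval ((j : ℝ) + 1) := by
  induction n using Nat.twoStepInduction generalizing j with
  | zero => simp [shiftedLegendre]
  | one =>
    have h : ∀ x : ℝ, x ^ j * shiftedLegendre 1 x = 2 * x ^ (j + 1) - x ^ j := fun x => by
      simp only [shiftedLegendre]; ring
    simp only [h]
    rw [integral_sub (Continuous.intervalIntegrable (by fun_prop) _ _)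
      (Continuous.intervalIntegrable (by fun_prop) _ _), integral_const_mul]
    simp only [integral_pow, one_pow, zero_pow (Nat.succ_ne_zero _), sub_zero, descPochhammer_one,
      ascPochhammer_succ_eval, ascPochhammer_one, eval_X]
    push_cast
    field_simp
    ring
  | more n ih₀ ih₁ =>
    have h : ∀ x : ℝ, x ^ j * shiftedLegendre (n + 2) x =
        (2 * (n + 1) + 1) / (n + 2) * (2 * (x ^ (j + 1) * shiftedLegendre (n + 1) x) -
          x ^ j * shiftedLegendre (n + 1) x) - (n + 1) / (n + 2) * (x ^ j * shiftedLegendre n x) :=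
      fun x => by simp only [shiftedLegendre]; ring
    simp only [h]
    rw [integral_sub (Continuous.intervalIntegrable (by fun_prop) _ _)
      (Continuous.intervalIntegrable (by fun_prop) _ _), integral_const_mul, integral_const_mul,
      integral_sub (Continuous.intervalIntegrable (by fun_prop) _ _)
      (Continuous.intervalIntegrable (by fun_prop) _ _), integral_const_mul, ih₀, ih₁, ih₁]
    have hA : 0 < (ascPochhammer ℝ n).eval ((j : ℝ) + 1) := ascPochhammer_pos _ _ (by positivity)
    have hshift : (ascPochhammer ℝ n).eval ((j : ℝ) + 1 + 1) =
        (ascPochhammer ℝ n).eval ((j : ℝ) + 1) * (j + 1 + n) / (j + 1) := by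
      rw [eq_div_iff (by positivity), ← ascPochhammer_succ_eval, ascPochhammer_succ_eval_left]
      ring
    push_cast
    rw [descPochhammer_succ_eval_left]
    simp only [ascPochhammer_succ_eval, descPochhammer_succ_eval, hshift]
    push_cast
    field_simp
    ring

theorem momentsVanish_shiftedLegendre (n : ℕ) : MomentsVanish n (shiftedLegendre n) := by
  intro j hj
  rw [integral_pow_mul_shiftedLegendre, descPochhammer_eval_eq_descFactorial,
    Nat.descFactorial_eq_zero_iff_lt.mpr hj, Nat.cast_zero, zero_div]

@[fun_prop]
theorem continuous_xi : ∀ l : List ℕ, Continuous (xi l)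
  | [] => continuous_const
  | _ :: l => continuous_primitive (μ := MeasureTheory.volume)
      (fun _ _ => ((continuous_shiftedLegendre _).mul (continuous_xi l)).intervalIntegrable _ _) 0

theorem exists_natDegree_le_xi_eq_eval {l : List ℕ} (hl : ∀ n ∈ l, 0 < n) :
    ∃ p : ℝ[X], p.natDegree ≤ l.sum ∧ ∀ x, xi l x = p.eval x := by
  induction l with
  | nil => exact ⟨1, by simp, fun x => by simp [xi]⟩
  | cons n l ih =>
    obtain ⟨q, hq_deg, hq⟩ := ih fun m hm => hl m (List.mem_cons_of_mem _ hm)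
    obtain ⟨P, hP_deg, hP⟩ := exists_natDegree_le_shiftedLegendre_eq_eval (n - 1)
    obtain ⟨r, hr_deg, hr⟩ := (P * q).exists_natDegree_le_eval_eq_integral
    refine ⟨r, ?_, fun x => by simp [xi, hr, hP, hq]⟩
    have := natDegree_mul_le_of_le hP_deg hq_deg
    have := hl n List.mem_cons_self
    rw [List.sum_cons]
    omega

theorem MomentsVanish.shiftedLegendre_mul_xi {l : List ℕ} {b d : ℕ} (hb : 0 < b)
    (h : MomentsVanish (d + b) (xi l)) :
    MomentsVanish (d + 1) fun x => shiftedLegendre (b - 1) x * xi l x := by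
  obtain ⟨P, hP_deg, hP⟩ := exists_natDegree_le_shiftedLegendre_eq_eval (b - 1)
  simpa only [hP] using (h.mono (by omega)).polynomial_mul (continuous_xi l) hP_deg

theorem MomentsVanish.xi_append {l tail : List ℕ} {d : ℕ} (hl : ∀ b ∈ l, 0 < b)
    (h : MomentsVanish (d + l.sum) (xi tail)) : MomentsVanish d (xi (l ++ tail)) := by
  induction l generalizing d with
  | nil => simpa using h
  | cons b l ih =>
    have hb := hl b List.mem_cons_self
    have h' : MomentsVanish (d + b) (xi (l ++ tail)) :=
      ih (fun c hc => hl c (List.mem_cons_of_mem _ hc)) (by simpa [add_assoc] using h)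
    exact (h'.shiftedLegendre_mul_xi hb).primitive (by fun_prop)

theorem xi_eq_zero_of_large_index_general (l : List ℕ) (hpos : ∀ n ∈ l, 0 < n)
    (hk : ∃ k : Fin l.length, 1 + (l.eraseIdx (k : ℕ)).sum < l.get k) :
    xi l 1 = 0 := by
  obtain ⟨k, hk⟩ := hk
  obtain ⟨l₁, l₂, hl, herase⟩ := l.exists_eq_append_cons_and_eraseIdx_eq k
  set n := l.get k
  rw [herase, List.sum_append] at hk
  rw [hl] at hpos ⊢
  obtain ⟨q, hq_deg, hq⟩ := exists_natDegree_le_xi_eq_eval (l := l₂) fun m hm =>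
    hpos m (by simp [hm])
  have hinner : MomentsVanish (l₁.sum + 1) fun x => shiftedLegendre (n - 1) x * xi l₂ x := by
    have hP := (momentsVanish_shiftedLegendre (n - 1)).mono (e := l₁.sum + 1 + l₂.sum) (by omega)
    simpa only [hq, mul_comm] using hP.polynomial_mul (continuous_shiftedLegendre _) hq_deg
  cases l₁ with
  | nil => exact hinner.integral_eq_zero
  | cons b l₁ =>
    have houter : MomentsVanish (0 + b) (xi (l₁ ++ n :: l₂)) :=
      MomentsVanish.xi_append (fun c hc => hpos c (by simp [hc]))
        ((hinner.primitive (by fun_prop)).mono (by simp))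
    exact (houter.shiftedLegendre_mul_xi (hpos b List.mem_cons_self)).integral_eq_zero

/-- Property (P2): if some index `n_k` exceeds the sum of the others by at least two,
i.e. `n_k > 1 + Σ_{i≠k} nᵢ` (the `nᵢ` positive, `m ≥ 1`), then `ξ(n₁,…,n_m) = 0`. -/
theorem xi_eq_zero_of_large_index (l : List ℕ) (hl : l ≠ []) (hpos : ∀ n ∈ l, 0 < n)
    (hk : ∃ k : Fin l.length, 1 + (l.eraseIdx (k : ℕ)).sum < l.get k) :
    xi l 1 = 0 :=
  xi_eq_zero_of_large_index_general l hpos hk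
end

section
/- Let Δ, V, ω ∈ ℝ and set Ω = √((Δ−ω)² + V²), assuming Ω > 0. Define H(t) as the 2×2 complex matrix with rows (Δ, V·e^{−2iωt}) and (V·e^{2iωt}, −Δ), and define U(t) as the 2×2 complex matrix with entries U_11(t) = e^{−iωt}(cos Ωt − i((Δ−ω)/Ω) sin Ωt), U_12(t) = −i(V/Ω)·e^{−iωt}·sin Ωt, U_21(t) = −i(V/Ω)·e^{iωt}·sin Ωt, U_22(t) = e^{iωt}(cos Ωt + i((Δ−ω)/Ω) sin Ωt). Then U(0) = I and, for every t ∈ ℝ, U is differentiable at t with i·U′(t) = H(t)·U(t); that is, U(t) is the exact propagator of the periodically driven two-level system. -/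
/-!
Pass to the frame rotating with the drive: with `R t = diag (e^{-iωt}, e^{iωt})` one has
`H t * R t = R t * H₀` for the static Hamiltonian `H₀ = diag (ω, -ω) + K`,
`K = !![Δ - ω, V; V, -(Δ - ω)]`. Since `K * K = Ω ^ 2 • 1`, the propagator of `K` is
`W t = cos (Ω t) • 1 - (sin (Ω t) / Ω) • (i • K)`, and the given `U` factors as `U t = R t * W t`.
The product rule then gives `i U' = R (diag (ω, -ω) + K) W = H R W = H U`.
-/

attribute [local instance] Matrix.normedAddCommGroup Matrix.normedSpace

open Matrix Complex

section MatrixCalculus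

variable {𝕜 𝔸 : Type*} [NontriviallyNormedField 𝕜] [NormedRing 𝔸] [NormedAlgebra 𝕜 𝔸]
  {l m n : Type*} {x : 𝕜}

theorem HasDerivAt.matrix_mul [Fintype l] [Fintype m] [Fintype n]
    {A : 𝕜 → Matrix l m 𝔸} {B : 𝕜 → Matrix m n 𝔸} {A' : Matrix l m 𝔸} {B' : Matrix m n 𝔸}
    (hA : HasDerivAt A A' x) (hB : HasDerivAt B B' x) :
    HasDerivAt (fun y => A y * B y) (A' * B x + A x * B') x := by
  refine hasDerivAt_pi.2 fun i => hasDerivAt_pi.2 fun j => ?_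
  simp only [mul_apply, Matrix.add_apply, ← Finset.sum_add_distrib]
  exact HasDerivAt.fun_sum fun k _ =>
    (hasDerivAt_pi.1 (hasDerivAt_pi.1 hA i) k).fun_mul (hasDerivAt_pi.1 (hasDerivAt_pi.1 hB k) j)

theorem HasDerivAt.matrix_diagonal [Fintype n] [DecidableEq n] {d : 𝕜 → n → 𝔸} {d' : n → 𝔸}
    (hd : HasDerivAt d d' x) :
    HasDerivAt (fun y => diagonal (d y)) (diagonal d') x := by
  refine hasDerivAt_pi.2 fun i => hasDerivAt_pi.2 fun j => ?_
  by_cases hij : i = j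
  · subst hij
    simpa only [diagonal_apply_eq] using hasDerivAt_pi.1 hd i
  · simpa only [diagonal_apply_ne _ hij] using hasDerivAt_const x (0 : 𝔸)

end MatrixCalculus

section Propagators

variable {n : Type*} [Fintype n] [DecidableEq n]

/-- The closed form of `exp (-i t K)` when `K * K = Ω ^ 2 • 1`. -/
noncomputable def rabiPropagator (K : Matrix n n ℂ) (Ω t : ℝ) : Matrix n n ℂ :=
  Real.cos (Ω * t) • 1 - (Real.sin (Ω * t) / Ω) • (I • K)

theorem hasDerivAt_rabiPropagator (K : Matrix n n ℂ) (Ω t : ℝ) (hΩ : Ω ≠ 0)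
    (hK : K * K = (Ω ^ 2 : ℂ) • 1) :
    HasDerivAt (rabiPropagator K Ω) (-I • (K * rabiPropagator K Ω t)) t := by
  have hcos := ((hasDerivAt_id' t).const_mul Ω).cos
  have hsin := ((hasDerivAt_id' t).const_mul Ω).sin.div_const Ω
  refine ((hcos.smul_const (1 : Matrix n n ℂ)).fun_sub (hsin.smul_const (I • K))).congr_deriv ?_
  have hΩ' : (Ω : ℂ) ≠ 0 := by exact_mod_cast hΩ
  rw [rabiPropagator, mul_sub, mul_smul_comm, mul_smul_comm, mul_smul_comm, hK]
  simp only [← Complex.coe_smul, smul_smul, smul_sub, mul_one]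
  match_scalars <;> field_simp
  rw [I_sq]
  ring

noncomputable def rotatingFrame (d : n → ℝ) (t : ℝ) : Matrix n n ℂ :=
  diagonal fun k => cexp (-I * d k * t)

theorem hasDerivAt_rotatingFrame (d : n → ℝ) (t : ℝ) :
    HasDerivAt (rotatingFrame d) (-I • (diagonal (fun k => (d k : ℂ)) * rotatingFrame d t)) t := by
  have hphase : ∀ k, HasDerivAt (fun s : ℝ => cexp (-I * d k * s))
      (-I * d k * cexp (-I * d k * t)) t := fun k =>
    (((hasDerivAt_id' (t : ℂ)).const_mul (-I * d k)).cexp.comp_ofReal).congr_deriv (by ring)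
  refine (HasDerivAt.matrix_diagonal (𝔸 := ℂ) (hasDerivAt_pi.2 hphase)).congr_deriv ?_
  rw [rotatingFrame, diagonal_mul_diagonal, ← diagonal_smul]
  congr 1
  funext k
  simp only [Pi.smul_apply, smul_eq_mul, mul_assoc]

theorem HasDerivAt.schrodinger_mul {R W : ℝ → Matrix n n ℂ} {D K : Matrix n n ℂ} {t : ℝ}
    (hR : HasDerivAt R (-I • (D * R t)) t) (hW : HasDerivAt W (-I • (K * W t)) t)
    (hDR : Commute D (R t)) :
    HasDerivAt (fun s => R s * W s) (-I • (R t * (D + K) * W t)) t := by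
  refine (hR.matrix_mul hW).congr_deriv ?_
  rw [hDR.eq, smul_mul_assoc, mul_smul_comm, ← smul_add, mul_add, add_mul, mul_assoc, mul_assoc]

end Propagators

theorem mul_self_traceless_symmetric_fin_two {R : Type*} [CommRing R] (a b : R) :
    !![a, b; b, -a] * !![a, b; b, -a] = (a ^ 2 + b ^ 2) • (1 : Matrix (Fin 2) (Fin 2) R) := by
  ext i j
  fin_cases i <;> fin_cases j <;> simp [Matrix.mul_apply, Fin.sum_univ_two] <;> ring

/-- The matrix `U t` with entries built from `Ω = √((Δ−ω)² + V²)` is the exact propagator of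
the periodically driven two-level system with Hamiltonian
`H t = !![Δ, V e^{−2iωt}; V e^{2iωt}, −Δ]`: it satisfies `U 0 = I` and
`i • U' t = H t * U t` for all `t`. -/
theorem driven_two_level_propagator (Δ V ω Ω : ℝ)
    (hΩdef : Ω = Real.sqrt ((Δ - ω) ^ 2 + V ^ 2)) (hΩpos : 0 < Ω)
    (H U : ℝ → Matrix (Fin 2) (Fin 2) ℂ)
    (hH : H = fun t : ℝ =>
      !![(Δ : ℂ), (V : ℂ) * Complex.exp (-2 * Complex.I * (ω : ℂ) * (t : ℂ));
         (V : ℂ) * Complex.exp (2 * Complex.I * (ω : ℂ) * (t : ℂ)), -(Δ : ℂ)])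
    (hU : U = fun t : ℝ =>
      !![Complex.exp (-Complex.I * (ω : ℂ) * (t : ℂ)) *
            ((Real.cos (Ω * t) : ℂ) -
              Complex.I * (((Δ - ω) / Ω : ℝ) : ℂ) * (Real.sin (Ω * t) : ℂ)),
         -Complex.I * ((V / Ω : ℝ) : ℂ) * Complex.exp (-Complex.I * (ω : ℂ) * (t : ℂ)) *
            (Real.sin (Ω * t) : ℂ);
         -Complex.I * ((V / Ω : ℝ) : ℂ) * Complex.exp (Complex.I * (ω : ℂ) * (t : ℂ)) *
            (Real.sin (Ω * t) : ℂ),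
         Complex.exp (Complex.I * (ω : ℂ) * (t : ℂ)) *
            ((Real.cos (Ω * t) : ℂ) +
              Complex.I * (((Δ - ω) / Ω : ℝ) : ℂ) * (Real.sin (Ω * t) : ℂ))]) :
    U 0 = 1 ∧ ∀ t : ℝ, ∃ U' : Matrix (Fin 2) (Fin 2) ℂ,
      HasDerivAt U U' t ∧ Complex.I • U' = H t * U t := by
  set d : Fin 2 → ℝ := ![ω, -ω]
  set K : Matrix (Fin 2) (Fin 2) ℂ := !![((Δ - ω : ℝ) : ℂ), V; V, -((Δ - ω : ℝ) : ℂ)]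
  have hΩsq : Ω ^ 2 = (Δ - ω) ^ 2 + V ^ 2 := by rw [hΩdef, Real.sq_sqrt (by positivity)]
  have hK : K * K = (Ω ^ 2 : ℂ) • 1 := by
    rw [mul_self_traceless_symmetric_fin_two]
    congr 1
    exact_mod_cast hΩsq.symm
  have hfactor : U = fun t => rotatingFrame d t * rabiPropagator K Ω t := by
    subst hU
    funext t
    ext i j
    fin_cases i <;> fin_cases j <;> simp [rotatingFrame, rabiPropagator, d, K] <;> ring
  have hH_rotating : ∀ t, H t * rotatingFrame d t =
      rotatingFrame d t * (diagonal (fun k => (d k : ℂ)) + K) := by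
    subst hH
    intro t
    ext i j
    fin_cases i <;> fin_cases j <;>
      simp [rotatingFrame, d, K, mul_assoc, ← Complex.exp_add] <;> ring_nf
  refine ⟨by simp [hfactor, rotatingFrame, rabiPropagator], fun t => ?_⟩
  have hR := hasDerivAt_rotatingFrame d t
  have hW := hasDerivAt_rabiPropagator K Ω t hΩpos.ne' hK
  refine ⟨_, hfactor ▸ hR.schrodinger_mul hW (commute_diagonal _ _), ?_⟩
  rw [smul_smul, mul_neg, I_mul_I, neg_neg, one_smul, ← hH_rotating, hfactor, mul_assoc]
end

section
/- Let t > 0, let k ≥ 1 and n_1, …, n_k be positive integers with n = n_1 + ⋯ + n_k, and let f : ℝⁿ → ℂ be a continuous function. Let I_n[t|n_1,…,n_k] ⊂ ℝⁿ be the set of tuples (t_1,…,t_n) such that within each consecutive block of coordinates of sizes n_1, …, n_k the coordinates are strictly decreasing and lie in (0,t) (i.e. I_n[t|n_1,…,n_k] is the product of the open simplices Δ_{n_1}[t] × ⋯ × Δ_{n_k}[t]), and let Δ_n[t] = {(t_1,…,t_n) : t > t_1 > t_2 > ⋯ > t_n > 0}. Then ∫_{I_n[t|n_1,…,n_k]}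 f(t_1,…,t_n) d(t_1,…,t_n) = Σ_{π ∈ P_n[n_1,…,n_k]} ∫_{Δ_n[t]} f(t_{π(1)},…,t_{π(n)}) d(t_1,…,t_n), where the sum runs over all permutations π of {1,…,n} that are strictly increasing on each of the consecutive blocks of sizes n_1, …, n_k. -/
/-!
Almost every point of `(0, t)ⁿ` has pairwise distinct coordinates (the diagonals are null), and
such a point lies in exactly one chamber `{y | y ∘ π⁻¹ strictly decreasing}`: `π⁻¹` is the
permutation sorting its coordinates. On a chamber the relative order of the coordinates is that
of `π`, so the block constraints hold either on the whole chamber or nowhere, and they hold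
exactly when `π` is increasing on the blocks. Finally `x ↦ x ∘ π` is volume preserving and maps
the chamber of `π⁻¹` onto `Δₙ[t]`.
-/

open MeasureTheory Function OrderDual

namespace Tuple

variable {α : Type*} [LinearOrder α] {n : ℕ}

theorem strictAnti_comp_sort_toDual {f : Fin n → α} (hf : Injective f) :
    StrictAnti (f ∘ sort (toDual ∘ f)) :=
  ((monotone_sort (toDual ∘ f)).strictMono_of_injective
    ((toDual.injective.comp hf).comp (sort _).injective)).dual_right

theorem eq_sort_toDual_of_strictAnti {f : Fin n → α} {σ : Equiv.Perm (Fin n)}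
    (h : StrictAnti (f ∘ σ)) : σ = sort (toDual ∘ f) :=
  eq_sort_iff.2 ⟨h.dual_right.monotone, fun _ _ hij heq => absurd heq (h.dual_right hij).ne⟩

end Tuple

theorem lt_flip_eq_inv_lt_of_strictAnti_comp {α ι : Type*} [LinearOrder α] [LinearOrder ι]
    {x : ι → α} {σ : Equiv.Perm ι} (h : StrictAnti (x ∘ σ)) :
    (fun p q => x q < x p) = fun p q => σ⁻¹ p < σ⁻¹ q := by
  ext p q
  simpa using h.lt_iff_gt (a := σ⁻¹ q) (b := σ⁻¹ p)

section NullDiagonal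

variable {ι : Type*} [Fintype ι]

theorem volume_setOf_apply_eq_apply {p q : ι} (hpq : p ≠ q) :
    volume {x : ι → ℝ | x p = x q} = 0 := by
  classical
  have hker : {x : ι → ℝ | x p = x q} =
      LinearMap.ker (LinearMap.proj (R := ℝ) (φ := fun _ : ι => ℝ) p - LinearMap.proj q) := by
    ext x
    simp [sub_eq_zero]
  rw [hker]
  refine Measure.addHaar_submodule _ _ fun htop => ?_
  simpa [hpq] using Submodule.eq_top_iff'.1 htop (Pi.single p 1)

theorem ae_injective_pi : ∀ᵐ x : ι → ℝ, Injective x := by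
  unfold Injective
  simp only [ae_all_iff]
  intro p q
  by_cases hpq : p = q
  · exact .of_forall fun _ _ => hpq
  · exact (measure_eq_zero_iff_ae_notMem.1 (volume_setOf_apply_eq_apply hpq)).mono
      fun x hx hxpq => (hx hxpq).elim

end NullDiagonal

section Chambers

variable {n : ℕ}

def sortedBox (s : Set ℝ) (σ : Equiv.Perm (Fin n)) : Set (Fin n → ℝ) :=
  {x | (∀ i, x i ∈ s) ∧ StrictAnti (x ∘ σ)}

theorem measurableSet_sortedBox {s : Set ℝ} (hs : MeasurableSet s) (σ : Equiv.Perm (Fin n)) :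
    MeasurableSet (sortedBox s σ) := by
  simp only [sortedBox, StrictAnti, Set.ofPred_and, Set.ofPred_forall]
  exact (MeasurableSet.iInter fun i => hs.preimage (measurable_pi_apply i)) |>.inter <|
    .iInter fun a => .iInter fun b => .iInter fun _ =>
      measurableSet_lt (measurable_pi_apply _) (measurable_pi_apply _)

theorem pairwise_disjoint_sortedBox (s : Set ℝ) : Pairwise (Disjoint on sortedBox (n := n) s) :=
  fun _ _ hne => Set.disjoint_left.2 fun _ hσ hτ =>
    hne <| (Tuple.eq_sort_toDual_of_strictAnti hσ.2).trans
      (Tuple.eq_sort_toDual_of_strictAnti hτ.2).symm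

theorem preimage_comp_perm_sortedBox (s : Set ℝ) (π σ : Equiv.Perm (Fin n)) :
    (fun x => x ∘ π) ⁻¹' sortedBox s σ = sortedBox s (π * σ) := by
  ext x
  simp only [sortedBox, Set.mem_preimage, Set.mem_ofPred_eq, Equiv.Perm.coe_mul, comp_assoc,
    comp_apply, π.forall_congr_right (q := (x · ∈ s))]

theorem setIntegral_sortedBox_inv {E : Type*} [NormedAddCommGroup E] [NormedSpace ℝ E]
    (s : Set ℝ) (π : Equiv.Perm (Fin n)) (f : (Fin n → ℝ) → E) :
    ∫ y in sortedBox s π⁻¹, f y = ∫ x in sortedBox s 1, f (x ∘ π) := by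
  let e := MeasurableEquiv.piCongrLeft (fun _ : Fin n => ℝ) π⁻¹
  have he : ⇑e = fun x => x ∘ π := by
    ext x i
    simp [e, MeasurableEquiv.piCongrLeft, Equiv.piCongrLeft, Equiv.Perm.inv_def]
  have := (volume_measurePreserving_piCongrLeft (fun _ => ℝ) π⁻¹).setIntegral_preimage_emb
    e.measurableEmbedding f (sortedBox s π⁻¹)
  rw [he, preimage_comp_perm_sortedBox, mul_inv_cancel] at this
  exact this.symm

theorem setOf_orderPattern_ae_eq_biUnion_sortedBox (s : Set ℝ)
    (Φ : (Fin n → Fin n → Prop) → Prop)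
    [DecidablePred fun π : Equiv.Perm (Fin n) => Φ fun p q => π p < π q] :
    {x : Fin n → ℝ | (∀ i, x i ∈ s) ∧ Φ fun p q => x q < x p} =ᵐ[volume]
      ⋃ π ∈ Finset.univ.filter (fun π : Equiv.Perm (Fin n) => Φ fun p q => π p < π q),
        sortedBox s π⁻¹ := by
  refine Filter.eventuallyEq_set.2 (ae_injective_pi.mono fun x hx => ?_)
  simp only [Set.mem_ofPred_eq, Set.mem_iUnion, Finset.mem_filter_univ, sortedBox, exists_prop]
  constructor
  · rintro ⟨hs, hΦ⟩
    have hsort := Tuple.strictAnti_comp_sort_toDual hx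
    refine ⟨(Tuple.sort (toDual ∘ x))⁻¹, ?_, hs, by simpa using hsort⟩
    simpa [lt_flip_eq_inv_lt_of_strictAnti_comp hsort] using hΦ
  · rintro ⟨π, hΦ, hs, hanti⟩
    refine ⟨hs, ?_⟩
    simpa [lt_flip_eq_inv_lt_of_strictAnti_comp hanti] using hΦ

theorem setIntegral_setOf_orderPattern_eq_sum_perm {E : Type*} [NormedAddCommGroup E]
    [NormedSpace ℝ E] {s : Set ℝ} (hs : MeasurableSet s) {f : (Fin n → ℝ) → E}
    (hf : IntegrableOn f {x | ∀ i, x i ∈ s}) (Φ : (Fin n → Fin n → Prop) → Prop)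
    [DecidablePred fun π : Equiv.Perm (Fin n) => Φ fun p q => π p < π q] :
    ∫ x in {x : Fin n → ℝ | (∀ i, x i ∈ s) ∧ Φ fun p q => x q < x p}, f x =
      ∑ π ∈ Finset.univ.filter (fun π : Equiv.Perm (Fin n) => Φ fun p q => π p < π q),
        ∫ x in {x : Fin n → ℝ | (∀ i, x i ∈ s) ∧ StrictAnti x}, f (x ∘ π) := by
  rw [setIntegral_congr_set (setOf_orderPattern_ae_eq_biUnion_sortedBox s Φ),
    integral_biUnion_finset _ (fun π _ => measurableSet_sortedBox hs π⁻¹)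
      ((pairwise_disjoint_sortedBox s).comp_of_injective inv_injective |>.set_pairwise _)
      (fun π _ => hf.mono_set fun x hx => hx.1)]
  exact Finset.sum_congr rfl fun π _ => setIntegral_sortedBox_inv s π f

end Chambers

theorem integral_block_simplices_eq_sum_perm_general (t : ℝ) (k : ℕ) (nn : Fin k → ℕ) (n : ℕ)
    (f : (Fin n → ℝ) → ℂ) (hf : Continuous f) :
    (∫ x in {x : Fin n → ℝ | (∀ p, 0 < x p ∧ x p < t) ∧
        ∀ j : Fin k, ∀ p q : Fin n,
          (∑ i ∈ Finset.univ.filter (fun i => i < j), nn i) ≤ (p : ℕ) →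
          (q : ℕ) < (∑ i ∈ Finset.univ.filter (fun i => i < j), nn i) + nn j →
          p < q → x q < x p}, f x) =
      ∑ π ∈ Finset.univ.filter (fun π : Equiv.Perm (Fin n) =>
          ∀ j : Fin k, ∀ p q : Fin n,
            (∑ i ∈ Finset.univ.filter (fun i => i < j), nn i) ≤ (p : ℕ) →
            (q : ℕ) < (∑ i ∈ Finset.univ.filter (fun i => i < j), nn i) + nn j →
            p < q → π p < π q),
        ∫ x in {x : Fin n → ℝ | (∀ p, 0 < x p ∧ x p < t) ∧
            ∀ p q : Fin n, p < q → x q < x p}, f (fun i => x (π i)) := by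
  have hbox : IntegrableOn f {x : Fin n → ℝ | ∀ i, x i ∈ Set.Ioo 0 t} :=
    (hf.continuousOn.integrableOn_compact (isCompact_univ_pi fun _ => isCompact_Icc)).mono_set
      fun x hx i _ => Set.Ioo_subset_Icc_self (hx i)
  exact setIntegral_setOf_orderPattern_eq_sum_perm measurableSet_Ioo hbox
    fun lt => ∀ j : Fin k, ∀ p q : Fin n,
      (∑ i ∈ Finset.univ.filter (fun i => i < j), nn i) ≤ (p : ℕ) →
      (q : ℕ) < (∑ i ∈ Finset.univ.filter (fun i => i < j), nn i) + nn j → p < q → lt p q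

/-- Decomposition of the integral over a product of time-ordered simplices into a sum of
time-ordered integrals: for continuous `f : ℝⁿ → ℂ`,
`∫_{I_n[t|n₁,…,n_k]} f = Σ_{π ∈ P_n[n₁,…,n_k]} ∫_{Δ_n[t]} f ∘ π`,
where `P_n[n₁,…,n_k]` is the set of permutations strictly increasing on each of the
consecutive blocks of sizes `n₁, …, n_k`. -/
theorem integral_block_simplices_eq_sum_perm (t : ℝ) (ht : 0 < t)
    (k : ℕ) (hk : 1 ≤ k) (nn : Fin k → ℕ) (hpos : ∀ i, 0 < nn i)
    (n : ℕ) (hn : n = ∑ i, nn i)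
    (f : (Fin n → ℝ) → ℂ) (hf : Continuous f) :
    (∫ x in {x : Fin n → ℝ | (∀ p, 0 < x p ∧ x p < t) ∧
        ∀ j : Fin k, ∀ p q : Fin n,
          (∑ i ∈ Finset.univ.filter (fun i => i < j), nn i) ≤ (p : ℕ) →
          (q : ℕ) < (∑ i ∈ Finset.univ.filter (fun i => i < j), nn i) + nn j →
          p < q → x q < x p}, f x) =
      ∑ π ∈ Finset.univ.filter (fun π : Equiv.Perm (Fin n) =>
          ∀ j : Fin k, ∀ p q : Fin n,
            (∑ i ∈ Finset.univ.filter (fun i => i < j), nn i) ≤ (p : ℕ) →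
            (q : ℕ) < (∑ i ∈ Finset.univ.filter (fun i => i < j), nn i) + nn j →
            p < q → π p < π q),
        ∫ x in {x : Fin n → ℝ | (∀ p, 0 < x p ∧ x p < t) ∧
            ∀ p q : Fin n, p < q → x q < x p}, f (fun i => x (π i)) :=
  integral_block_simplices_eq_sum_perm_general t k nn n f hf
end
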